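/- The limit lim_{n→∞} f(n)^{1/n} exists, where f(n) is the number of subsets of {1,...,n} in which no element divides another. Moreover the limit lies in [√2, 2]. -/

import Mathlib

open Finset Filter
open scoped Classical

/-- A finite set of naturals is primitive: no element divides another distinct element. -/
def Primitive (S : Finset ℕ) : Prop := ∀ a ∈ S, ∀ b ∈ S, a ≠ b → ¬ a ∣ b

/-- `f n` is the number of primitive subsets of `{1,...,n}`. -/
noncomputable def f (n : ℕ) : ℕ :=
  ((Finset.Icc 1 n).powerset.filter Primitive).card

/-- A natural is `k`-smooth: all its prime factors are at most the `k`-th prime. -/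
def SmoothNat (k m : ℕ) : Prop := ∀ p, p.Prime → p ∣ m → p ≤ Nat.nth Nat.Prime (k - 1)

/-- A set is `k`-core: no two distinct elements `a ∣ b` with `b/a` having all
prime factors at most the `k`-th prime. -/
def KCore (k : ℕ) (S : Finset ℕ) : Prop :=
  ∀ a ∈ S, ∀ b ∈ S, a ≠ b → ¬ (a ∣ b ∧ SmoothNat k (b / a))

/-- `fk n k` is the number of `k`-core subsets of `{1,...,n}`. -/
noncomputable def fk (n k : ℕ) : ℕ :=
  ((Finset.Icc 1 n).powerset.filter (KCore k)).card

/-- `Dk k` is the product of the first `k` primes. -/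
noncomputable def Dk (k : ℕ) : ℕ := ∏ i ∈ Finset.range k, Nat.nth Nat.Prime i

/-- `Pk k x` is the number of primitive subsets of the set of `k`-smooth integers in `{1,...,x}`. -/
noncomputable def Pk (k x : ℕ) : ℕ :=
  (((Finset.Icc 1 x).filter (SmoothNat k)).powerset.filter Primitive).card

/-!
Write every positive `x` uniquely as `x = m * s` with `s` smooth (prime factors below
`y = nth Prime k`) and `m` rough (prime factors at least `y`). A `k`-core set may contain `a ∣ b`
only when `b / a` is not smooth, so `k`-core subsets of `[1, n]` are exactly the unions of
primitive subsets of the classes `m * {s ≤ n / m smooth}`, and `fk n k = ∏_{m rough} Pk k (n / m)`.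
Since `Pk k` grows by a factor at most `2`, and only at smooth arguments, while the rough numbers
have a density (being periodic modulo the product of the primes below `y`), dominated convergence
makes `log (fk n k) / n` converge. Finally `f n ≤ fk n k ≤ f n * 2 ^ (n / y)`, because a `k`-core
set is primitive above `n / y`. So `log (f n) / n` lies within `log 2 / y` of a convergent sequence
for every `k`, hence is Cauchy.
-/

open Topology

section PowersetCount

variable {ι α : Type*} [DecidableEq ι] [DecidableEq α]

lemma card_filter_powerset_biUnion (I : Finset ι) (B : ι → Finset α)
    (hB : (I : Set ι).PairwiseDisjoint B) (P : ι → Finset α → Prop) [∀ i, DecidablePred (P i)] :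
    #{S ∈ (I.biUnion B).powerset | ∀ i ∈ I, P i (S ∩ B i)} =
      ∏ i ∈ I, #{T ∈ (B i).powerset | P i T} := by
  rw [← card_pi]
  set Fam := I.pi fun i => {T ∈ (B i).powerset | P i T}
  have union_inter {F} (hF : F ∈ Fam) {j} (hj : j ∈ I) :
      (I.attach.biUnion fun i => F i.1 i.2) ∩ B j = F j hj := by
    ext x
    simp only [mem_inter, mem_biUnion, mem_attach, true_and, Subtype.exists]
    constructor
    · rintro ⟨⟨i, hi, hx⟩, hxj⟩
      have hxi : x ∈ B i := (mem_powerset.1 (mem_filter.1 (Finset.mem_pi.1 hF i hi)).1) hx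
      obtain rfl : i = j := hB.elim hi hj (not_disjoint_iff.2 ⟨x, hxi, hxj⟩)
      exact hx
    · exact fun hx => ⟨⟨j, hj, hx⟩, (mem_powerset.1 (mem_filter.1 (Finset.mem_pi.1 hF j hj)).1) hx⟩
  refine card_nbij' (fun S i _ => S ∩ B i) (fun F => I.attach.biUnion fun i => F i.1 i.2)
    ?_ ?_ ?_ ?_
  · intro S hS
    simp only [coe_filter, mem_powerset, Set.mem_ofPred_eq] at hS
    exact Finset.mem_pi.2 fun i hi => mem_filter.2 ⟨mem_powerset.2 inter_subset_right, hS.2 i hi⟩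
  · intro F hF
    simp only [coe_filter, mem_powerset, Set.mem_ofPred_eq]
    refine ⟨biUnion_subset.2 fun i _ => ?_, fun j hj => (union_inter hF hj).symm ▸ ?_⟩
    · exact (mem_powerset.1 (mem_filter.1 (Finset.mem_pi.1 hF i.1 i.2)).1).trans
        (subset_biUnion_of_mem B i.2)
    · exact (mem_filter.1 (Finset.mem_pi.1 hF j hj)).2
  · intro S hS
    simp only [coe_filter, mem_powerset, Set.mem_ofPred_eq] at hS
    ext x
    simp only [mem_biUnion, mem_attach, true_and, Subtype.exists, mem_inter]
    refine ⟨fun ⟨_, _, hx, _⟩ => hx, fun hx => ?_⟩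
    obtain ⟨i, hi, hxi⟩ := mem_biUnion.1 (hS.1 hx)
    exact ⟨i, hi, hx, hxi⟩
  · intro F hF
    funext j hj
    exact union_inter hF hj

lemma card_filter_powerset_insert_le {X : Finset α} (a : α) {P : Finset α → Prop} [DecidablePred P]
    (hP : ∀ S T, P S → T ⊆ S → P T) :
    #{S ∈ (insert a X).powerset | P S} ≤ 2 * #{S ∈ X.powerset | P S} := by
  rw [powerset_insert, filter_union, two_mul]
  refine (card_union_le _ _).trans (add_le_add_right ?_ _)
  calc #{S ∈ X.powerset.image (insert a) | P S}
      ≤ #({S ∈ X.powerset | P S}.image (insert a)) := by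
        refine card_le_card fun S hS => ?_
        obtain ⟨hS, hPS⟩ := mem_filter.1 hS
        obtain ⟨T, hT, rfl⟩ := mem_image.1 hS
        exact mem_image.2 ⟨T, mem_filter.2 ⟨hT, hP _ _ hPS (subset_insert a T)⟩, rfl⟩
    _ ≤ _ := card_image_le

end PowersetCount

section Periodic

open Function

variable {p : ℕ → Prop} [DecidablePred p] {a : ℕ}

lemma card_filter_Ico_mul_of_periodic (hp : Periodic p a) (b q : ℕ) :
    #{m ∈ Ico b (b + q * a) | p m} = q * a.count p := by
  induction q with
  | zero => simp
  | succ q ih =>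
    rw [← Ico_union_Ico_eq_Ico (Nat.le_add_right b (q * a)) (by nlinarith), filter_union,
      card_union_of_disjoint (disjoint_filter_filter (Ico_disjoint_Ico_consecutive _ _ _)), ih,
      show b + (q + 1) * a = b + q * a + a by ring, Nat.filter_Ico_card_eq_of_periodic _ _ p hp]
    ring

lemma abs_card_filter_Ico_sub_le_of_periodic (hp : Periodic p a) (ha : 0 < a) (b x : ℕ) :
    |(#{m ∈ Ico b (b + x) | p m} : ℝ) - x * (a.count p / a)| ≤ a.count p := by
  obtain ⟨q, r, hr, rfl⟩ : ∃ q r, r < a ∧ x = q * a + r :=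
    ⟨x / a, x % a, Nat.mod_lt x ha, (Nat.div_add_mod' x a).symm⟩
  have hsplit := card_union_of_disjoint (disjoint_filter_filter (s := Ico b (b + q * a))
    (t := Ico (b + q * a) (b + q * a + r)) (p := p) (q := p) (Ico_disjoint_Ico_consecutive _ _ _))
  rw [← filter_union, Ico_union_Ico_eq_Ico (Nat.le_add_right _ _) (Nat.le_add_right _ _),
    card_filter_Ico_mul_of_periodic hp] at hsplit
  have htail : #{m ∈ Ico (b + q * a) (b + q * a + r) | p m} ≤ a.count p := by
    rw [← Nat.filter_Ico_card_eq_of_periodic (b + q * a) a p hp]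
    exact card_le_card (filter_subset_filter _ (Ico_subset_Ico le_rfl (by omega)))
  have ha' : (0 : ℝ) < a := by exact_mod_cast ha
  have hr' : (r : ℝ) * (a.count p / a) ≤ a.count p := by
    rw [mul_div_assoc', div_le_iff₀ ha', mul_comm]
    exact mul_le_mul_of_nonneg_left (by exact_mod_cast hr.le) (Nat.cast_nonneg _)
  have hr0 : 0 ≤ (r : ℝ) * (a.count p / a) := by positivity
  have htail' : (#{m ∈ Ico (b + q * a) (b + q * a + r) | p m} : ℝ) ≤ a.count p := by
    exact_mod_cast htail
  rw [← add_assoc, hsplit, abs_sub_le_iff]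
  push_cast
  rw [add_mul, mul_assoc, mul_div_cancel₀ _ ha'.ne']
  constructor <;> linarith

lemma tendsto_card_filter_Icc_div_of_periodic (hp : Periodic p a) (ha : 0 < a) {j : ℕ}
    (hj : 0 < j) :
    Tendsto (fun n : ℕ => (#{m ∈ Icc 1 (n / j) | p m} : ℝ) / n) atTop
      (𝓝 (a.count p / a / j)) := by
  set δ : ℝ := a.count p / a
  have hδ : 0 ≤ δ := by positivity
  have hj' : (0 : ℝ) < j := by exact_mod_cast hj
  have hbound : ∀ n : ℕ, 0 < n →
      |(#{m ∈ Icc 1 (n / j) | p m} : ℝ) / n - δ / j| ≤ (a.count p + δ) / n := by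
    intro n hn
    have hn' : (0 : ℝ) < n := by exact_mod_cast hn
    have hcount := abs_card_filter_Ico_sub_le_of_periodic hp ha 1 (n / j)
    rw [add_comm, Ico_add_one_right_eq_Icc] at hcount
    have hfloor : |((n / j : ℕ) : ℝ) - n / j| ≤ 1 := by
      rw [abs_sub_comm, abs_of_nonneg (sub_nonneg.2 Nat.cast_div_le)]
      have := Nat.lt_div_mul_add (a := n) hj
      rw [sub_le_iff_le_add, div_le_iff₀ hj']
      exact_mod_cast (by nlinarith : n ≤ (1 + n / j) * j)
    have hnum : |(#{m ∈ Icc 1 (n / j) | p m} : ℝ) - n * δ / j| ≤ a.count p + δ :=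
      calc _ = |((#{m ∈ Icc 1 (n / j) | p m} : ℝ) - (n / j : ℕ) * δ)
              + δ * (((n / j : ℕ) : ℝ) - n / j)| := by ring_nf
        _ ≤ |(#{m ∈ Icc 1 (n / j) | p m} : ℝ) - (n / j : ℕ) * δ|
              + δ * |((n / j : ℕ) : ℝ) - n / j| := by
            rw [← abs_of_nonneg hδ, ← abs_mul, abs_of_nonneg hδ]; exact abs_add_le _ _
        _ ≤ a.count p + δ * 1 := by gcongr
        _ = _ := by ring
    rw [show (#{m ∈ Icc 1 (n / j) | p m} : ℝ) / n - δ / j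
        = ((#{m ∈ Icc 1 (n / j) | p m} : ℝ) - n * δ / j) / n by field_simp,
      abs_div, abs_of_pos hn']
    exact div_le_div_of_nonneg_right hnum hn'.le
  rw [tendsto_iff_norm_sub_tendsto_zero]
  refine squeeze_zero' (Eventually.of_forall fun _ => norm_nonneg _) ?_
    (tendsto_const_div_atTop_nhds_zero_nat (a.count p + δ))
  filter_upwards [eventually_gt_atTop 0] with n hn using hbound n hn

end Periodic

lemma cauchySeq_of_forall_eventually_abs_sub_le {a : ℕ → ℝ}
    (h : ∀ ε > 0, ∃ b : ℕ → ℝ, CauchySeq b ∧ ∀ᶠ n in atTop, |a n - b n| ≤ ε) : CauchySeq a := by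
  rw [Metric.cauchySeq_iff]
  intro ε hε
  obtain ⟨b, hb, hab⟩ := h (ε / 4) (by positivity)
  obtain ⟨N₁, hN₁⟩ := Metric.cauchySeq_iff.1 hb (ε / 4) (by positivity)
  obtain ⟨N₂, hN₂⟩ := eventually_atTop.1 hab
  refine ⟨max N₁ N₂, fun m hm n hn => ?_⟩
  have h1 := hN₁ m (le_of_max_le_left hm) n (le_of_max_le_left hn)
  have h2 := abs_le.1 (hN₂ m (le_of_max_le_right hm))
  have h3 := abs_le.1 (hN₂ n (le_of_max_le_right hn))
  rw [Real.dist_eq, abs_lt] at h1 ⊢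
  constructor <;> linarith

def IsRough (y m : ℕ) : Prop := ∀ p, p.Prime → p ∣ m → y ≤ p

section SmoothRough

open Nat

variable {y : ℕ}

lemma isRough_one : IsRough y 1 := fun _ hp h => (hp.ne_one (Nat.dvd_one.1 h)).elim

lemma one_mem_smoothNumbers : 1 ∈ y.smoothNumbers :=
  mem_smoothNumbers'.2 fun _ hp h => (hp.ne_one (Nat.dvd_one.1 h)).elim

lemma IsRough.mul {a b : ℕ} (ha : IsRough y a) (hb : IsRough y b) : IsRough y (a * b) :=
  fun p hp hdvd => (hp.dvd_mul.1 hdvd).elim (ha p hp) (hb p hp)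

lemma IsRough.coprime {m s : ℕ} (hm : IsRough y m) (hs : s ∈ y.smoothNumbers) : m.Coprime s :=
  Nat.coprime_of_dvd fun p hp hpm hps => (hm p hp hpm).not_gt (mem_smoothNumbers'.1 hs p hp hps)

lemma exists_isRough_mul_mem_smoothNumbers {x : ℕ} (hx : x ≠ 0) :
    ∃ m s, IsRough y m ∧ s ∈ y.smoothNumbers ∧ x = m * s := by
  induction x using Nat.recOnMul with
  | zero => exact absurd rfl hx
  | one => exact ⟨1, 1, isRough_one, one_mem_smoothNumbers, rfl⟩
  | prime p hp =>
    by_cases hpy : p < y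
    · exact ⟨1, p, isRough_one, mem_smoothNumbers_of_lt hp.pos hpy, (one_mul p).symm⟩
    · refine ⟨p, 1, fun q hq h => ?_, one_mem_smoothNumbers, (mul_one p).symm⟩
      rw [(Nat.prime_dvd_prime_iff_eq hq hp).1 h]; omega
  | mul a b iha ihb =>
    obtain ⟨m, s, hm, hs, rfl⟩ := iha (left_ne_zero_of_mul hx)
    obtain ⟨m', s', hm', hs', rfl⟩ := ihb (right_ne_zero_of_mul hx)
    exact ⟨m * m', s * s', hm.mul hm', mul_mem_smoothNumbers hs hs', by ring⟩

lemma eq_of_isRough_of_mul_eq {m m' s s' : ℕ} (hm : IsRough y m) (hm' : IsRough y m')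
    (hs : s ∈ y.smoothNumbers) (hs' : s' ∈ y.smoothNumbers) (h : m * s = m' * s') : m = m' :=
  Nat.dvd_antisymm ((hm.coprime hs').dvd_of_dvd_mul_right (h ▸ dvd_mul_right m s))
    ((hm'.coprime hs).dvd_of_dvd_mul_right (h ▸ dvd_mul_right m' s'))

end SmoothRough

lemma isRough_periodic (y : ℕ) : Function.Periodic (IsRough y) (∏ p ∈ y.primesBelow, p) := by
  intro m
  refine propext (forall₂_congr fun q hq => ?_)
  by_cases hqy : q < y
  · rw [Nat.dvd_add_left (dvd_prod_of_mem (fun p : ℕ => p) (Nat.mem_primesBelow.2 ⟨hqy, hq⟩))]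
  · simp only [not_lt.1 hqy, implies_true]

lemma summable_indicator_smoothNumbers_inv (y : ℕ) :
    Summable (y.smoothNumbers.indicator fun s : ℕ => (s : ℝ)⁻¹) := by
  let inv : ℕ →* ℝ := ⟨⟨fun n => (n : ℝ)⁻¹, by simp⟩, fun a b => by push_cast; exact mul_inv _ _⟩
  have h := (EulerProduct.summable_and_hasSum_smoothNumbers_prod_primesBelow_geometric
    (f := inv) (fun hp => by simpa [inv] using inv_lt_one_of_one_lt₀ (by exact_mod_cast hp.one_lt))
    y).1
  simp only [inv, MonoidHom.coe_mk, OneHom.coe_mk, norm_inv, Real.norm_natCast] at h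
  exact summable_subtype_iff_indicator.1 h

lemma le_nth_prime_sub_one_iff {k p : ℕ} (hk : k ≠ 0) (hp : p.Prime) :
    p ≤ Nat.nth Nat.Prime (k - 1) ↔ p < Nat.nth Nat.Prime k := by
  have hmono := Nat.nth_strictMono Nat.infinite_setOfPred_prime
  rw [← Nat.nth_count hp, hmono.le_iff_le, hmono.lt_iff_lt]
  omega

lemma smoothNat_iff_mem_smoothNumbers {k m : ℕ} (hk : k ≠ 0) :
    SmoothNat k m ↔ m ∈ (Nat.nth Nat.Prime k).smoothNumbers := by
  rw [Nat.mem_smoothNumbers']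
  exact forall₂_congr fun p hp => imp_congr_right fun _ => le_nth_prime_sub_one_iff hk hp

lemma SmoothNat.of_dvd {k s t : ℕ} (hs : SmoothNat k s) (h : t ∣ s) : SmoothNat k t :=
  fun p hp hpt => hs p hp (hpt.trans h)

lemma SmoothNat.mul {k s t : ℕ} (hs : SmoothNat k s) (ht : SmoothNat k t) : SmoothNat k (s * t) :=
  fun p hp hpst => (hp.dvd_mul.1 hpst).elim (hs p hp) (ht p hp)

lemma primitive_empty : Primitive ∅ := fun a ha => absurd ha (notMem_empty a)

lemma Primitive.subset {S T : Finset ℕ} (hS : Primitive S) (hT : T ⊆ S) : Primitive T :=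
  fun a ha b hb => hS a (hT ha) b (hT hb)

lemma Primitive.kCore {k : ℕ} {S : Finset ℕ} (hS : Primitive S) : KCore k S :=
  fun a ha b hb hab h => hS a ha b hb hab h.1

lemma primitive_image_mul_left_iff {m : ℕ} (hm : m ≠ 0) {T : Finset ℕ} :
    Primitive (T.image (m * ·)) ↔ Primitive T := by
  simp only [Primitive, forall_mem_image, (mul_right_injective₀ hm).ne_iff,
    Nat.mul_dvd_mul_iff_left (Nat.pos_of_ne_zero hm)]

lemma f_pos (n : ℕ) : 0 < f n :=
  card_pos.2 ⟨∅, mem_filter.2 ⟨empty_mem_powerset _, primitive_empty⟩⟩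

lemma f_le_two_pow (n : ℕ) : f n ≤ 2 ^ n :=
  (card_filter_le _ _).trans (by rw [card_powerset, Nat.card_Icc, Nat.add_sub_cancel])

lemma two_pow_le_f (n : ℕ) : 2 ^ (n - n / 2) ≤ f n := by
  have hprim : ∀ S ⊆ Icc (n / 2 + 1) n, Primitive S := by
    intro S hS a ha b hb hab ⟨t, ht⟩
    have ha' := mem_Icc.1 (hS ha)
    have hb' := mem_Icc.1 (hS hb)
    rcases Nat.lt_or_ge t 2 with h | h
    · interval_cases t <;> simp_all
    · have : a * 2 ≤ a * t := Nat.mul_le_mul_left a h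
      omega
  calc 2 ^ (n - n / 2) = #(Icc (n / 2 + 1) n).powerset := by
        rw [card_powerset, Nat.card_Icc]; congr 1; omega
    _ ≤ f n := card_le_card fun S hS => mem_filter.2
        ⟨mem_powerset.2 ((mem_powerset.1 hS).trans (Icc_subset_Icc (by omega) le_rfl)),
          hprim S (mem_powerset.1 hS)⟩

lemma f_le_fk (n k : ℕ) : f n ≤ fk n k :=
  card_le_card fun _ hS => mem_filter.2 ⟨(mem_filter.1 hS).1, (mem_filter.1 hS).2.kCore⟩

lemma KCore.primitive_filter_lt {k n : ℕ} (hk : k ≠ 0) {S : Finset ℕ} (hS : KCore k S)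
    (hSn : S ⊆ Icc 1 n) : Primitive {a ∈ S | n / Nat.nth Nat.Prime k < a} := by
  rintro a ha b hb hab ⟨t, rfl⟩
  obtain ⟨ha, hna⟩ := mem_filter.1 ha
  obtain ⟨hb, -⟩ := mem_filter.1 hb
  have hp := (Nat.prime_nth_prime k).pos
  have ha0 : 0 < a := (mem_Icc.1 (hSn ha)).1
  have ht0 : 0 < t := Nat.pos_of_mul_pos_left (mem_Icc.1 (hSn hb)).1
  have htp : t < Nat.nth Nat.Prime k := by
    have h1 := (Nat.div_lt_iff_lt_mul hp).1 hna
    have h2 := (mem_Icc.1 (hSn hb)).2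
    by_contra! h
    nlinarith [Nat.mul_le_mul_left a h]
  refine hS a ha _ hb hab ⟨dvd_mul_right a t, ?_⟩
  rw [Nat.mul_div_cancel_left t ha0]
  exact fun q hq hqt => (le_nth_prime_sub_one_iff hk hq).2 ((Nat.le_of_dvd ht0 hqt).trans_lt htp)

lemma fk_le_f_mul_two_pow {k : ℕ} (hk : k ≠ 0) (n : ℕ) :
    fk n k ≤ f n * 2 ^ (n / Nat.nth Nat.Prime k) := by
  set c := n / Nat.nth Nat.Prime k
  have hc : c ≤ n := Nat.div_le_self n _
  calc fk n k ≤ #({S ∈ (Icc 1 n).powerset | Primitive S} ×ˢ (Icc 1 c).powerset) := by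
        refine card_le_card_of_injOn (fun S => ({a ∈ S | c < a}, {a ∈ S | a ≤ c})) ?_ ?_
        · intro S hS
          obtain ⟨hSn, hSk⟩ := mem_filter.1 hS
          refine mem_product.2 ⟨mem_filter.2 ⟨mem_powerset.2 ((filter_subset _ _).trans
            (mem_powerset.1 hSn)), hSk.primitive_filter_lt hk (mem_powerset.1 hSn)⟩, ?_⟩
          · refine mem_powerset.2 fun a ha => ?_
            obtain ⟨ha, hac⟩ := mem_filter.1 ha
            exact mem_Icc.2 ⟨(mem_Icc.1 (mem_powerset.1 hSn ha)).1, hac⟩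
        · intro S _ T _ h
          simp only [Prod.mk.injEq] at h
          rw [← filter_union_filter_not_eq (c < ·) S, ← filter_union_filter_not_eq (c < ·) T]
          simp only [not_lt, h]
    _ = f n * 2 ^ c := by rw [card_product, card_powerset, Nat.card_Icc, Nat.add_sub_cancel, f]

section ProductFormula

noncomputable def roughUpTo (y n : ℕ) : Finset ℕ := {m ∈ Icc 1 n | IsRough y m}

noncomputable def smoothBlock (k n m : ℕ) : Finset ℕ :=
  {s ∈ Icc 1 (n / m) | SmoothNat k s}.image (m * ·)

variable {k n : ℕ}

lemma mem_smoothBlock {m x : ℕ} :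
    x ∈ smoothBlock k n m ↔ ∃ s, (1 ≤ s ∧ s ≤ n / m) ∧ SmoothNat k s ∧ m * s = x := by
  simp [smoothBlock, and_assoc]

lemma biUnion_smoothBlock (hk : k ≠ 0) :
    (roughUpTo (Nat.nth Nat.Prime k) n).biUnion (smoothBlock k n) = Icc 1 n := by
  ext x
  simp only [mem_biUnion, roughUpTo, mem_filter, mem_Icc, mem_smoothBlock]
  constructor
  · rintro ⟨m, ⟨⟨hm1, -⟩, -⟩, s, ⟨hs1, hsn⟩, -, rfl⟩
    exact ⟨Nat.one_le_iff_ne_zero.2 (by positivity),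
      (Nat.mul_le_mul_left m hsn).trans (Nat.mul_div_le n m)⟩
  · rintro ⟨hx1, hxn⟩
    obtain ⟨m, s, hm, hs, rfl⟩ := exists_isRough_mul_mem_smoothNumbers (y := Nat.nth Nat.Prime k)
      (Nat.one_le_iff_ne_zero.1 hx1)
    have hs0 := Nat.pos_of_ne_zero (Nat.ne_zero_of_mem_smoothNumbers hs)
    have hm0 : 0 < m := Nat.pos_of_mul_pos_right hx1
    refine ⟨m, ⟨⟨hm0, (Nat.le_mul_of_pos_right m hs0).trans hxn⟩, hm⟩, s,
      ⟨hs0, (Nat.le_div_iff_mul_le hm0).2 (by linarith [mul_comm m s])⟩,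
      (smoothNat_iff_mem_smoothNumbers hk).2 hs, rfl⟩

lemma pairwiseDisjoint_smoothBlock (hk : k ≠ 0) :
    ((roughUpTo (Nat.nth Nat.Prime k) n : Set ℕ)).PairwiseDisjoint (smoothBlock k n) := by
  intro m hm m' hm' hne
  refine disjoint_left.2 fun x hx hx' => hne ?_
  obtain ⟨s, -, hs, rfl⟩ := mem_smoothBlock.1 hx
  obtain ⟨s', -, hs', h⟩ := mem_smoothBlock.1 hx'
  rw [smoothNat_iff_mem_smoothNumbers hk] at hs hs'
  exact eq_of_isRough_of_mul_eq (mem_filter.1 hm).2 (mem_filter.1 hm').2 hs hs' h.symm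

lemma kCore_iff_forall_primitive_inter (hk : k ≠ 0) {S : Finset ℕ} (hS : S ⊆ Icc 1 n) :
    KCore k S ↔ ∀ m ∈ roughUpTo (Nat.nth Nat.Prime k) n, Primitive (S ∩ smoothBlock k n m) := by
  constructor
  · intro hS' m hm a ha b hb hab ⟨t, hbt⟩
    obtain ⟨s, ⟨hs1, -⟩, -, rfl⟩ := mem_smoothBlock.1 (mem_inter.1 ha).2
    obtain ⟨s', -, hs', rfl⟩ := mem_smoothBlock.1 (mem_inter.1 hb).2
    have hm0 : 0 < m := (mem_Icc.1 (mem_filter.1 hm).1).1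
    have hs't : s' = s * t := by
      rw [mul_assoc] at hbt; exact Nat.eq_of_mul_eq_mul_left hm0 hbt
    refine hS' _ (mem_inter.1 ha).1 _ (mem_inter.1 hb).1 hab ⟨⟨t, hbt⟩, ?_⟩
    rw [hbt, Nat.mul_div_cancel_left t (by positivity)]
    exact hs'.of_dvd ⟨s, by rw [hs't, mul_comm]⟩
  · rintro h a ha b hb hab ⟨⟨t, rfl⟩, ht⟩
    have ha' : a ∈ (roughUpTo (Nat.nth Nat.Prime k) n).biUnion (smoothBlock k n) := by
      rw [biUnion_smoothBlock hk]; exact hS ha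
    obtain ⟨m, hm, ham⟩ := mem_biUnion.1 ha'
    obtain ⟨s, -, hs, rfl⟩ := mem_smoothBlock.1 ham
    obtain ⟨hb1, hbn⟩ := mem_Icc.1 (hS hb)
    have hm0 : 0 < m := (mem_Icc.1 (mem_filter.1 hm).1).1
    have hst : 0 < s * t := Nat.pos_of_ne_zero fun h0 => by simp [mul_assoc, h0] at hb1
    rw [Nat.mul_div_cancel_left t (Nat.mul_pos hm0 (Nat.pos_of_mul_pos_right hst))] at ht
    have hb : m * s * t ∈ S ∩ smoothBlock k n m := by
      refine mem_inter.2 ⟨hb, mem_smoothBlock.2 ⟨s * t, ⟨hst, ?_⟩, hs.mul ht, by ring⟩⟩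
      rw [Nat.le_div_iff_mul_le hm0]; linarith [mul_comm m (s * t), mul_assoc m s t]
    exact h m hm _ (mem_inter.2 ⟨ha, ham⟩) _ hb hab (dvd_mul_right _ t)

lemma card_primitive_smoothBlock {m : ℕ} (hm : m ≠ 0) :
    #{T ∈ (smoothBlock k n m).powerset | Primitive T} = Pk k (n / m) := by
  rw [smoothBlock, powerset_image, filter_image,
    card_image_of_injective _ (image_injective (mul_right_injective₀ hm)), Pk]
  exact congrArg card (filter_congr fun T _ => primitive_image_mul_left_iff hm)

lemma fk_eq_prod (hk : k ≠ 0) (n : ℕ) :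
    fk n k = ∏ m ∈ roughUpTo (Nat.nth Nat.Prime k) n, Pk k (n / m) := by
  calc fk n k = #{S ∈ ((roughUpTo (Nat.nth Nat.Prime k) n).biUnion (smoothBlock k n)).powerset |
        ∀ m ∈ roughUpTo (Nat.nth Nat.Prime k) n, Primitive (S ∩ smoothBlock k n m)} := by
        rw [biUnion_smoothBlock hk, fk]
        exact congrArg card (filter_congr fun S hS =>
          kCore_iff_forall_primitive_inter hk (mem_powerset.1 hS))
    _ = ∏ m ∈ roughUpTo (Nat.nth Nat.Prime k) n,
          #{T ∈ (smoothBlock k n m).powerset | Primitive T} :=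
        card_filter_powerset_biUnion (roughUpTo (Nat.nth Nat.Prime k) n) (smoothBlock k n)
          (pairwiseDisjoint_smoothBlock hk) (fun _ T => Primitive T)
    _ = _ := prod_congr rfl fun m hm =>
        card_primitive_smoothBlock (Nat.one_le_iff_ne_zero.1 (mem_Icc.1 (mem_filter.1 hm).1).1)

end ProductFormula

section PkGrowth

variable {k : ℕ}

lemma Pk_pos (k x : ℕ) : 0 < Pk k x :=
  card_pos.2 ⟨∅, mem_filter.2 ⟨empty_mem_powerset _, primitive_empty⟩⟩

lemma Pk_zero (k : ℕ) : Pk k 0 = 1 := by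
  rw [Pk, Icc_eq_empty (by omega), filter_empty, powerset_empty, card_eq_one]
  exact ⟨∅, filter_eq_self.2 fun T hT a ha => absurd ha (by simp_all)⟩

lemma filter_smoothNat_Icc_succ (x : ℕ) : {s ∈ Icc 1 (x + 1) | SmoothNat k s} =
    if SmoothNat k (x + 1) then insert (x + 1) {s ∈ Icc 1 x | SmoothNat k s}
    else {s ∈ Icc 1 x | SmoothNat k s} := by
  rw [← insert_Icc_right_eq_Icc_add_one (by omega), filter_insert]

lemma Pk_le_Pk_succ (x : ℕ) : Pk k x ≤ Pk k (x + 1) := by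
  refine card_le_card (filter_subset_filter _ (powerset_mono.2 (filter_subset_filter _ ?_)))
  exact Icc_subset_Icc le_rfl (Nat.le_succ x)

lemma Pk_succ_le_two_mul (x : ℕ) : Pk k (x + 1) ≤ 2 * Pk k x := by
  rw [Pk, filter_smoothNat_Icc_succ]
  split_ifs
  · exact card_filter_powerset_insert_le _ fun _ _ hS hT => hS.subset hT
  · exact Nat.le_mul_of_pos_left _ two_pos

lemma Pk_succ_of_not_smoothNat {x : ℕ} (hx : ¬ SmoothNat k (x + 1)) : Pk k (x + 1) = Pk k x := by
  rw [Pk, filter_smoothNat_Icc_succ, if_neg hx, Pk]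

noncomputable def logPkStep (k i : ℕ) : ℝ := Real.log (Pk k (i + 1)) - Real.log (Pk k i)

lemma logPkStep_nonneg (i : ℕ) : 0 ≤ logPkStep k i :=
  sub_nonneg.2 (Real.log_le_log (by exact_mod_cast Pk_pos k i) (by exact_mod_cast Pk_le_Pk_succ i))

lemma logPkStep_le_indicator (hk : k ≠ 0) (i : ℕ) :
    logPkStep k i ≤
      (Nat.nth Nat.Prime k).smoothNumbers.indicator (fun _ => Real.log 2) (i + 1) := by
  have hpos : (0 : ℝ) < Pk k i := by exact_mod_cast Pk_pos k i
  by_cases hi : SmoothNat k (i + 1)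
  · rw [Set.indicator_of_mem ((smoothNat_iff_mem_smoothNumbers hk).1 hi), logPkStep,
      sub_le_iff_le_add, ← Real.log_mul two_ne_zero hpos.ne']
    exact Real.log_le_log (by exact_mod_cast Pk_pos k (i + 1))
      (by exact_mod_cast Pk_succ_le_two_mul i)
  · rw [Set.indicator_of_notMem (mt (smoothNat_iff_mem_smoothNumbers hk).2 hi), logPkStep,
      Pk_succ_of_not_smoothNat hi, sub_self]

lemma log_Pk_eq_sum (k x : ℕ) : Real.log (Pk k x) = ∑ i ∈ range x, logPkStep k i := by
  unfold logPkStep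
  rw [sum_range_sub (fun i => Real.log (Pk k i)), Pk_zero, Nat.cast_one, Real.log_one, sub_zero]

end PkGrowth

section LogFkLimit

variable {k : ℕ}

lemma log_fk_eq_sum (hk : k ≠ 0) (n : ℕ) :
    Real.log (fk n k) =
      ∑ i ∈ range n, logPkStep k i * #(roughUpTo (Nat.nth Nat.Prime k) (n / (i + 1))) := by
  rw [fk_eq_prod hk, Nat.cast_prod, Real.log_prod fun m _ => by exact_mod_cast (Pk_pos k _).ne']
  simp only [log_Pk_eq_sum]
  rw [sum_comm' (s' := fun i => roughUpTo (Nat.nth Nat.Prime k) (n / (i + 1))) (t' := range n)]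
  · simp only [sum_const, nsmul_eq_mul, mul_comm]
  · intro m i
    simp only [roughUpTo, mem_filter, mem_Icc, mem_range]
    by_cases hm : 1 ≤ m
    · have e1 : i < n / m ↔ (i + 1) * m ≤ n := Nat.le_div_iff_mul_le hm
      have e2 : m ≤ n / (i + 1) ↔ m * (i + 1) ≤ n := Nat.le_div_iff_mul_le (Nat.succ_pos i)
      rw [e1, e2]
      constructor
      · rintro ⟨⟨-, hr⟩, h⟩
        exact ⟨⟨⟨hm, by linarith⟩, hr⟩, by nlinarith⟩
      · rintro ⟨⟨⟨-, h⟩, hr⟩, -⟩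
        exact ⟨⟨⟨hm, by nlinarith⟩, hr⟩, by linarith⟩
    · simp only [hm, false_and]

lemma summable_logPkStep_div (hk : k ≠ 0) : Summable fun i : ℕ => logPkStep k i / (i + 1) := by
  refine Summable.of_nonneg_of_le (fun i => by have := logPkStep_nonneg (k := k) i; positivity)
    (fun i => ?_) (((summable_nat_add_iff 1).2
      (summable_indicator_smoothNumbers_inv (Nat.nth Nat.Prime k))).mul_left (Real.log 2))
  have hstep := logPkStep_le_indicator hk i
  by_cases hs : i + 1 ∈ (Nat.nth Nat.Prime k).smoothNumbers
  · rw [Set.indicator_of_mem hs] at hstep ⊢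
    push_cast
    exact div_le_div_of_nonneg_right hstep (by positivity)
  · rw [Set.indicator_of_notMem hs] at hstep ⊢
    rw [le_antisymm hstep (logPkStep_nonneg i), zero_div, mul_zero]

lemma exists_tendsto_log_fk_div (hk : k ≠ 0) :
    ∃ β, Tendsto (fun n : ℕ => Real.log (fk n k) / n) atTop (𝓝 β) := by
  set y := Nat.nth Nat.Prime k
  have hD : 0 < ∏ p ∈ y.primesBelow, p := prod_pos fun p hp => (Nat.prime_of_mem_primesBelow hp).pos
  set F : ℕ → ℕ → ℝ := fun n i => logPkStep k i * (#(roughUpTo y (n / (i + 1))) / n)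
  have hlim := tendsto_tsum_of_dominated_convergence (f := F) (summable_logPkStep_div hk)
    (fun i => by
      have := (tendsto_card_filter_Icc_div_of_periodic (isRough_periodic y) hD
        (Nat.succ_pos i)).const_mul (logPkStep k i)
      push_cast at this
      exact this)
    (by
      filter_upwards [eventually_gt_atTop 0] with n hn i
      have hn' : (0 : ℝ) < n := by exact_mod_cast hn
      have hcard : (#(roughUpTo y (n / (i + 1))) : ℝ) ≤ n / (i + 1) := by
        calc (#(roughUpTo y (n / (i + 1))) : ℝ) ≤ ((n / (i + 1) : ℕ) : ℝ) := by
              exact_mod_cast (card_filter_le _ _).trans (by rw [Nat.card_Icc, Nat.add_sub_cancel])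
          _ ≤ n / (i + 1) := by exact_mod_cast Nat.cast_div_le (α := ℝ)
      have hstep := logPkStep_nonneg (k := k) i
      rw [Real.norm_of_nonneg (by positivity)]
      calc F n i ≤ logPkStep k i * ((n / (i + 1)) / n) := by simp only [F]; gcongr
        _ = logPkStep k i / (i + 1) := by field_simp)
  refine ⟨_, hlim.congr' ?_⟩
  filter_upwards [eventually_gt_atTop 0] with n hn
  rw [tsum_eq_sum (s := range n), log_fk_eq_sum hk, sum_div]
  · exact sum_congr rfl fun i _ => by simp only [F]; ring
  · intro i hi
    rw [mem_range, not_lt] at hi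
    simp [F, Nat.div_eq_of_lt (by omega : n < i + 1), roughUpTo]

end LogFkLimit

lemma log_f_div_le (n : ℕ) : Real.log (f n) / n ≤ Real.log 2 := by
  rcases Nat.eq_zero_or_pos n with rfl | hn
  · simp [Real.log_nonneg one_le_two]
  rw [div_le_iff₀ (by exact_mod_cast hn), mul_comm, ← Real.log_pow]
  exact Real.log_le_log (by exact_mod_cast f_pos n) (by exact_mod_cast f_le_two_pow n)

lemma log_two_div_two_le_log_f_div {n : ℕ} (hn : 0 < n) : Real.log 2 / 2 ≤ Real.log (f n) / n := by
  have hhalf : (n : ℝ) / 2 ≤ (n - n / 2 : ℕ) := by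
    have : n ≤ 2 * (n - n / 2) := by omega
    have : (n : ℝ) ≤ 2 * (n - n / 2 : ℕ) := by exact_mod_cast this
    linarith
  rw [le_div_iff₀ (by exact_mod_cast hn)]
  calc Real.log 2 / 2 * n = (n : ℝ) / 2 * Real.log 2 := by ring
    _ ≤ (n - n / 2 : ℕ) * Real.log 2 := by gcongr
    _ = Real.log (2 ^ (n - n / 2) : ℕ) := by push_cast; rw [Real.log_pow]
    _ ≤ Real.log (f n) := Real.log_le_log (by positivity) (by exact_mod_cast two_pow_le_f n)

lemma abs_log_f_div_sub_log_fk_div_le {k : ℕ} (hk : k ≠ 0) {n : ℕ} (hn : 0 < n) :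
    |Real.log (f n) / n - Real.log (fk n k) / n| ≤ Real.log 2 / Nat.nth Nat.Prime k := by
  set p := Nat.nth Nat.Prime k
  have hn' : (0 : ℝ) < n := by exact_mod_cast hn
  have hp : (0 : ℝ) < p := by exact_mod_cast (Nat.prime_nth_prime k).pos
  have hf : (0 : ℝ) < f n := by exact_mod_cast f_pos n
  have hlow : Real.log (f n) ≤ Real.log (fk n k) :=
    Real.log_le_log hf (by exact_mod_cast f_le_fk n k)
  have hhigh : Real.log (fk n k) ≤ Real.log (f n) + (n / p : ℕ) * Real.log 2 := by
    rw [← Real.log_pow, ← Real.log_mul hf.ne' (by positivity)]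
    exact Real.log_le_log (hf.trans_le (by exact_mod_cast f_le_fk n k))
      (by exact_mod_cast fk_le_f_mul_two_pow hk n)
  have hdiv : ((n / p : ℕ) : ℝ) * Real.log 2 / n ≤ Real.log 2 / p := by
    rw [div_le_div_iff₀ hn' hp]
    have := (le_div_iff₀ hp).1 (Nat.cast_div_le (α := ℝ) (m := n) (n := p))
    nlinarith [Real.log_nonneg one_le_two]
  rw [← sub_div, abs_div, abs_of_pos hn', abs_of_nonpos (by linarith), div_le_iff₀ hn']
  linarith [(div_le_iff₀ hn').1 hdiv]

lemma cauchySeq_log_f_div : CauchySeq fun n : ℕ => Real.log (f n) / n := by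
  refine cauchySeq_of_forall_eventually_abs_sub_le fun ε hε => ?_
  obtain ⟨k, hk⟩ := exists_nat_gt (Real.log 2 / ε)
  have hk0 : k ≠ 0 := by
    rintro rfl; exact (div_pos (Real.log_pos one_lt_two) hε).not_ge (by exact_mod_cast hk.le)
  obtain ⟨β, hβ⟩ := exists_tendsto_log_fk_div hk0
  refine ⟨_, hβ.cauchySeq, ?_⟩
  filter_upwards [eventually_gt_atTop 0] with n hn
  refine (abs_log_f_div_sub_log_fk_div_le hk0 hn).trans ?_
  have hkpos : (0 : ℝ) < k := by exact_mod_cast Nat.pos_of_ne_zero hk0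
  have hkp : (k : ℝ) ≤ Nat.nth Nat.Prime k := by
    exact_mod_cast (Nat.nth_strictMono Nat.infinite_setOfPred_prime).id_le k
  calc Real.log 2 / Nat.nth Nat.Prime k ≤ Real.log 2 / k :=
        div_le_div_of_nonneg_left (Real.log_nonneg one_le_two) hkpos hkp
    _ ≤ ε := by
        rw [div_lt_iff₀ hε] at hk
        rw [div_le_iff₀ hkpos]
        linarith

/-- Main theorem: `lim_n f(n)^{1/n}` exists and lies in `[√2, 2]`. -/
theorem stmt_16 :
    ∃ L : ℝ, Tendsto (fun n : ℕ => (f n : ℝ) ^ ((1 : ℝ) / n)) atTop (nhds L) ∧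
      Real.sqrt 2 ≤ L ∧ L ≤ 2 := by
  obtain ⟨l, hl⟩ := cauchySeq_tendsto_of_complete cauchySeq_log_f_div
  have hlow : Real.log 2 / 2 ≤ l :=
    ge_of_tendsto hl ((eventually_gt_atTop 0).mono fun _ hn => log_two_div_two_le_log_f_div hn)
  have hhigh : l ≤ Real.log 2 := le_of_tendsto' hl log_f_div_le
  refine ⟨Real.exp l, ?_, ?_, ?_⟩
  · have hrpow : (fun n : ℕ => (f n : ℝ) ^ ((1 : ℝ) / n)) =
        fun n => Real.exp (Real.log (f n) / n) :=
      funext fun n => by rw [Real.rpow_def_of_pos (by exact_mod_cast f_pos n), mul_one_div]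
    rw [hrpow]
    exact (Real.continuous_exp.tendsto l).comp hl
  · rw [Real.sqrt_eq_rpow, Real.rpow_def_of_pos two_pos, mul_one_div]
    exact Real.exp_le_exp.2 hlow
  · calc Real.exp l ≤ Real.exp (Real.log 2) := Real.exp_le_exp.2 hhigh
      _ = 2 := Real.exp_log two_pos
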